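/- arXiv:1207.2950 — 9 statements merged into one kernel-verified Lean document; each statement's English description precedes it below -/
import Mathlib

section
/- (Euclid, Elements X.2–X.3; the paper's Proposition 1(c).) Let a > b > 0 be real numbers and let e be the anthyphairesis remainder sequence of (a, b). Then a and b are commensurable if and only if the anthyphairesis of a to b is finite, i.e., there exists n : ℕ with e n = 0. Equivalently, a and b are incommensurable if and only if e n ≠ 0 for every n. -/
/-- `e` is the anthyphairesis remainder sequence of the pair `(a, b)`:
`e 0 = a`, `e 1 = b`, and each new remainder is obtained by division with
remainder of `e n` by `e (n+1)` (stopping, i.e. giving `0`, once a remainder vanishes). -/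
def IsAnthSeq (a b : ℝ) (e : ℕ → ℝ) : Prop :=
  e 0 = a ∧ e 1 = b ∧
    ∀ n : ℕ,
      (e (n + 1) ≠ 0 → e (n + 2) = e n - (⌊e n / e (n + 1)⌋ : ℝ) * e (n + 1)) ∧
      (e (n + 1) = 0 → e (n + 2) = 0)

/-- Two positive reals are commensurable if they are both positive natural
multiples of a common magnitude `c > 0`. -/
def Commensurable2 (a b : ℝ) : Prop :=
  ∃ c : ℝ, 0 < c ∧ ∃ m n : ℕ, 0 < m ∧ 0 < n ∧ a = (m : ℝ) * c ∧ b = (n : ℝ) * c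

/-- Euclid X.2–X.3: `a`, `b` are commensurable iff their anthyphairesis is finite;
equivalently, they are incommensurable iff no remainder ever vanishes. -/
theorem anthyphairesis_finite_iff_commensurable
    (a b : ℝ) (hb : 0 < b) (hab : b < a) (e : ℕ → ℝ) (he : IsAnthSeq a b e) :
    (Commensurable2 a b ↔ ∃ n : ℕ, e n = 0) ∧
    (¬ Commensurable2 a b ↔ ∀ n : ℕ, e n ≠ 0) := by
  classical
  obtain ⟨h0, h1, hrec⟩ := he
  have ha : 0 < a := hb.trans hab
  have key : ∀ k, 0 < e (k+1) →
      e k - (⌊e k / e (k + 1)⌋ : ℝ) * e (k + 1) = e (k+1) * Int.fract (e k / e (k+1)) := by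
    intro k hpos
    rw [Int.fract]
    field_simp
  have nonneg : ∀ n, 0 ≤ e n := by
    intro n
    induction n using Nat.strong_induction_on with
    | _ n ih =>
      match n, ih with
      | 0, _ => rw [h0]; exact ha.le
      | 1, _ => rw [h1]; exact hb.le
      | (k+2), ih =>
        by_cases hk : e (k+1) = 0
        · rw [(hrec k).2 hk]
        · have hpos : 0 < e (k+1) := lt_of_le_of_ne (ih (k+1) (by omega)) (Ne.symm hk)
          rw [(hrec k).1 hk, key k hpos]
          exact mul_nonneg hpos.le (Int.fract_nonneg _)
  have step_lt : ∀ k, 0 < e (k+1) → e (k+2) < e (k+1) := by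
    intro k hpos
    rw [(hrec k).1 hpos.ne', key k hpos]
    calc e (k+1) * Int.fract (e k / e (k+1)) < e (k+1) * 1 :=
          mul_lt_mul_of_pos_left (Int.fract_lt_one _) hpos
      _ = e (k+1) := mul_one _
  have main : Commensurable2 a b ↔ ∃ n, e n = 0 := by
    constructor
    · rintro ⟨c, hc, m, n, hm, hn, ham, hbn⟩
      by_contra hno
      push_neg at hno
      have pos : ∀ k, 0 < e k := fun k => lt_of_le_of_ne (nonneg k) (Ne.symm (hno k))
      have hmul : ∀ k, ∃ z : ℤ, e k = (z : ℝ) * c := by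
        intro k
        induction k using Nat.strong_induction_on with
        | _ k ih =>
          match k, ih with
          | 0, _ => exact ⟨m, by rw [h0, ham]; push_cast; ring⟩
          | 1, _ => exact ⟨n, by rw [h1, hbn]; push_cast; ring⟩
          | (j+2), ih =>
            obtain ⟨z0, hz0⟩ := ih j (by omega)
            obtain ⟨z1, hz1⟩ := ih (j+1) (by omega)
            refine ⟨z0 - ⌊e j / e (j+1)⌋ * z1, ?_⟩
            rw [(hrec j).1 (hno (j+1)), hz0, hz1]
            push_cast
            ring
      choose z hz using hmul
      have zpos : ∀ k, 1 ≤ z k := by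
        intro k
        by_contra hzk
        push_neg at hzk
        have : e k ≤ 0 := by
          rw [hz k]
          have : (z k : ℝ) ≤ 0 := by exact_mod_cast Int.lt_add_one_iff.mp (by omega : z k < 0 + 1)
          exact mul_nonpos_of_nonpos_of_nonneg this hc.le
        exact absurd (pos k) (not_lt.mpr this)
      have zdec : ∀ k, z (k+2) < z (k+1) := by
        intro k
        have hlt := step_lt k (pos (k+1))
        rw [hz (k+2), hz (k+1)] at hlt
        have h2 : (z (k+2) : ℝ) < z (k+1) := lt_of_mul_lt_mul_right hlt hc.le
        exact_mod_cast h2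
      have bound : ∀ k : ℕ, z (k+1) ≤ z 1 - k := by
        intro k
        induction k with
        | zero => simp
        | succ k ihk =>
          have h2 : z (k + 1 + 1) < z (k + 1) := zdec k
          push_cast
          omega
      have := bound (z 1).toNat
      have h1z := zpos ((z 1).toNat + 1)
      omega
    · rintro ⟨N, hN⟩
      have hex : ∃ n, e n = 0 := ⟨N, hN⟩
      set N0 := Nat.find hex with hN0def
      have hN0 : e N0 = 0 := Nat.find_spec hex
      have hmin : ∀ j, j < N0 → e j ≠ 0 := fun j hj => Nat.find_min hex hj
      have pos : ∀ j, j < N0 → 0 < e j := fun j hj =>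
        lt_of_le_of_ne (nonneg j) (Ne.symm (hmin j hj))
      have hN02 : 2 ≤ N0 := by
        by_contra hlt
        push_neg at hlt
        interval_cases N0
        · exact absurd hN0 (by rw [h0]; exact ha.ne')
        · exact absurd hN0 (by rw [h1]; exact hb.ne')
      set c := e (N0 - 1) with hcdef
      have hc : 0 < c := pos (N0 - 1) (by omega)
      have claim : ∀ d j, j + d = N0 → ∃ m : ℕ, e j = (m : ℝ) * c := by
        intro d
        induction d using Nat.strong_induction_on with
        | _ d ih =>
          match d, ih with
          | 0, _ => intro j hj; exact ⟨0, by simp [hj ▸ hN0, show j = N0 by omega, hN0]⟩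
          | 1, _ => intro j hj; exact ⟨1, by simp [hcdef, show j = N0 - 1 by omega]⟩
          | (d+2), ih =>
            intro j hj
            obtain ⟨m1, hm1⟩ := ih (d+1) (by omega) (j+1) (by omega)
            obtain ⟨m2, hm2⟩ := ih d (by omega) (j+2) (by omega)
            have hj1 : 0 < e (j+1) := pos (j+1) (by omega)
            have hj0 : 0 < e j := pos j (by omega)
            set q := ⌊e j / e (j+1)⌋ with hqdef
            have hq : 0 ≤ q := Int.floor_nonneg.mpr (by positivity)
            refine ⟨m2 + q.toNat * m1, ?_⟩
            have hrw : e j = e (j+2) + (q : ℝ) * e (j+1) := by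
              rw [(hrec j).1 hj1.ne']; ring
            have hqn : ((q.toNat : ℕ) : ℝ) = (q : ℝ) := by
              exact_mod_cast Int.toNat_of_nonneg hq
            rw [hrw, hm1, hm2]
            push_cast
            rw [hqn]
            ring
      obtain ⟨m, hm⟩ := claim N0 0 (by omega)
      obtain ⟨n, hn⟩ := claim (N0 - 1) 1 (by omega)
      rw [h0] at hm
      rw [h1] at hn
      refine ⟨c, hc, m, n, ?_, ?_, hm, hn⟩
      · rcases Nat.eq_zero_or_pos m with h | h
        · rw [h] at hm; simp at hm; exact absurd hm ha.ne'
        · exact h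
      · rcases Nat.eq_zero_or_pos n with h | h
        · rw [h] at hn; simp at hn; exact absurd hn hb.ne'
        · exact h
  exact ⟨main, (not_congr main).trans not_exists⟩
end

section
/- (Well-definedness of the anthyphairetic definition of proportion, 1(e): equal quotient sequences force equal ratios.) Let a > b > 0 and c > d > 0 be real numbers, let e and f be the anthyphairesis remainder sequences of (a, b) and (c, d) respectively. Assume e n ≠ 0 and f n ≠ 0 for all n : ℕ, and that the quotient sequences agree: ⌊e n / e (n+1)⌋ = ⌊f n / f (n+1)⌋ for all n. Then a / b = c / d. -/
def IsCompleteQuotients (r : ℕ → ℝ) : Prop :=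
  ∀ n, r (n + 1) ≠ 0 ∧ Int.fract (r n) = (r (n + 1))⁻¹

namespace IsCompleteQuotients

variable {r s : ℕ → ℝ}

theorem eq_floor_add_inv (hr : IsCompleteQuotients r) (n : ℕ) :
    r n = ⌊r n⌋ + (r (n + 1))⁻¹ := by
  rw [← (hr n).2, Int.floor_add_fract]

theorem one_lt (hr : IsCompleteQuotients r) (n : ℕ) : 1 < r (n + 1) := by
  obtain ⟨hne, hfract⟩ := hr n
  have hinv_pos : 0 < (r (n + 1))⁻¹ :=
    hfract ▸ (Int.fract_nonneg _).lt_of_ne' (hfract ▸ inv_ne_zero hne)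
  have hinv_lt : (r (n + 1))⁻¹ < 1 := hfract ▸ Int.fract_lt_one _
  simpa using (inv_lt_one₀ (inv_pos.mp hinv_pos)).mp hinv_lt

theorem two_lt_mul_succ (hr : IsCompleteQuotients r) (n : ℕ) : 2 < r (n + 1) * r (n + 2) := by
  have hfloor : (1 : ℝ) ≤ ⌊r (n + 1)⌋ := by
    exact_mod_cast Int.le_floor.mpr (by exact_mod_cast (hr.one_lt n).le)
  have hpos : 0 < r (n + 2) := one_pos.trans (hr.one_lt (n + 1))
  calc 2 < r (n + 2) + 1 := by linarith [hr.one_lt (n + 1)]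
    _ ≤ (⌊r (n + 1)⌋ + (r (n + 2))⁻¹) * r (n + 2) := by
      rw [add_mul, inv_mul_cancel₀ hpos.ne']
      nlinarith
    _ = r (n + 1) * r (n + 2) := by rw [← hr.eq_floor_add_inv]

theorem abs_sub_eq_div (hr : IsCompleteQuotients r) (hs : IsCompleteQuotients s) {n : ℕ}
    (hfloor : ⌊r n⌋ = ⌊s n⌋) :
    |r n - s n| = |r (n + 1) - s (n + 1)| / (r (n + 1) * s (n + 1)) := by
  have hr₀ : 0 < r (n + 1) := one_pos.trans (hr.one_lt n)
  have hs₀ : 0 < s (n + 1) := one_pos.trans (hs.one_lt n)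
  have hsub : r n - s n = (s (n + 1) - r (n + 1)) / (r (n + 1) * s (n + 1)) := by
    rw [hr.eq_floor_add_inv n, hs.eq_floor_add_inv n, hfloor]
    field_simp
    ring
  rw [hsub, abs_div, abs_sub_comm (s _), abs_of_pos (mul_pos hr₀ hs₀)]

theorem abs_sub_le_div_four (hr : IsCompleteQuotients r) (hs : IsCompleteQuotients s) {n : ℕ}
    (hfloor₀ : ⌊r n⌋ = ⌊s n⌋) (hfloor₁ : ⌊r (n + 1)⌋ = ⌊s (n + 1)⌋) :
    |r n - s n| ≤ |r (n + 2) - s (n + 2)| / 4 := by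
  rw [hr.abs_sub_eq_div hs hfloor₀, hr.abs_sub_eq_div hs hfloor₁, div_div]
  gcongr
  calc (4 : ℝ) = 2 * 2 := by norm_num
    _ ≤ (r (n + 1) * r (n + 2)) * (s (n + 1) * s (n + 2)) :=
      mul_le_mul (hr.two_lt_mul_succ n).le (hs.two_lt_mul_succ n).le zero_le_two
        (by linarith [hr.two_lt_mul_succ n])
    _ = _ := by ring

theorem eq_of_floor_eq (hr : IsCompleteQuotients r) (hs : IsCompleteQuotients s)
    (hfloor : ∀ n, ⌊r n⌋ = ⌊s n⌋) : r 0 = s 0 := by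
  have hcontract (m : ℕ) : |r 0 - s 0| ≤ |r (2 * m) - s (2 * m)| / 4 ^ m := by
    induction m with
    | zero => simp
    | succ m ih =>
      calc |r 0 - s 0| ≤ |r (2 * m) - s (2 * m)| / 4 ^ m := ih
        _ ≤ |r (2 * m + 2) - s (2 * m + 2)| / 4 / 4 ^ m := by
          gcongr
          exact hr.abs_sub_le_div_four hs (hfloor _) (hfloor _)
        _ = |r (2 * (m + 1)) - s (2 * (m + 1))| / 4 ^ (m + 1) := by ring_nf
  have hle (m : ℕ) : |r 0 - s 0| ≤ (1 / 4) ^ m :=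
    calc |r 0 - s 0| ≤ |r (2 * m) - s (2 * m)| / 4 ^ m := hcontract m
      _ ≤ 1 / 4 ^ m := by gcongr; exact (Int.abs_sub_lt_one_of_floor_eq_floor (hfloor _)).le
      _ = (1 / 4) ^ m := by rw [div_pow, one_pow]
  have hzero : |r 0 - s 0| ≤ 0 :=
    ge_of_tendsto' (tendsto_pow_atTop_nhds_zero_of_lt_one (by norm_num) (by norm_num)) hle
  exact sub_eq_zero.mp (abs_nonpos_iff.mp hzero)

end IsCompleteQuotients

theorem IsAnthSeq.isCompleteQuotients {a b : ℝ} {e : ℕ → ℝ} (he : IsAnthSeq a b e)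
    (hne : ∀ n, e (n + 1) ≠ 0) : IsCompleteQuotients fun n ↦ e n / e (n + 1) := by
  intro n
  refine ⟨div_ne_zero (hne n) (hne (n + 1)), ?_⟩
  rw [inv_div, (he.2.2 n).1 (hne n), ← Int.self_sub_floor]
  field_simp [hne n]

theorem anthyphairesis_quotients_determine_ratio_general
    (a b c d : ℝ)
    (e f : ℕ → ℝ) (he : IsAnthSeq a b e) (hf : IsAnthSeq c d f)
    (hene : ∀ n : ℕ, e n ≠ 0) (hfne : ∀ n : ℕ, f n ≠ 0)
    (hq : ∀ n : ℕ, ⌊e n / e (n + 1)⌋ = ⌊f n / f (n + 1)⌋) :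
    a / b = c / d := by
  have hratio := (he.isCompleteQuotients fun n ↦ hene _).eq_of_floor_eq
    (hf.isCompleteQuotients fun n ↦ hfne _) hq
  obtain ⟨rfl, rfl, -⟩ := he
  obtain ⟨rfl, rfl, -⟩ := hf
  exact hratio

/-- Well-definedness of the anthyphairetic definition of proportion: if the
(everywhere defined) quotient sequences of `(a, b)` and `(c, d)` agree, then
`a / b = c / d`. -/
theorem anthyphairesis_quotients_determine_ratio
    (a b c d : ℝ) (hb : 0 < b) (hab : b < a) (hd : 0 < d) (hcd : d < c)
    (e f : ℕ → ℝ) (he : IsAnthSeq a b e) (hf : IsAnthSeq c d f)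
    (hene : ∀ n : ℕ, e n ≠ 0) (hfne : ∀ n : ℕ, f n ≠ 0)
    (hq : ∀ n : ℕ, ⌊e n / e (n + 1)⌋ = ⌊f n / f (n + 1)⌋) :
    a / b = c / d :=
  anthyphairesis_quotients_determine_ratio_general a b c d e f he hf hene hfne hq
end

section
/- (Logos Criterion, ratio form; the paper's Proposition 1(g).) Let a > b > 0 be real numbers and let e be the anthyphairesis remainder sequence of (a, b), with e k ≠ 0 for all k. Suppose there are indices n < m such that e n / e (n+1) = e m / e (m+1). Then the sequence of successive ratios is eventually periodic with period m − n: for every k ≥ n, e k / e (k+1) = e (k + (m − n)) / e (k + (m − n) + 1). -/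
/-- The Logos Criterion (ratio form): if two ratios of successive remainders
coincide, the sequence of successive ratios is eventually periodic. -/
theorem logos_criterion_ratios
    (a b : ℝ) (hb : 0 < b) (hab : b < a) (e : ℕ → ℝ) (he : IsAnthSeq a b e)
    (hene : ∀ k : ℕ, e k ≠ 0)
    (n m : ℕ) (hnm : n < m) (hlogos : e n / e (n + 1) = e m / e (m + 1)) :
    ∀ k : ℕ, n ≤ k → e k / e (k + 1) = e (k + (m - n)) / e (k + (m - n) + 1) := by
  obtain ⟨h0, h1, hrec⟩ := he
  have key : ∀ j j' : ℕ, e j / e (j + 1) = e j' / e (j' + 1) →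
      e (j + 1) / e (j + 2) = e (j' + 1) / e (j' + 2) := by
    intro j j' h
    have hj2 := (hrec j).1 (hene (j + 1))
    have hj'2 := (hrec j').1 (hene (j' + 1))
    have e1 : e (j + 2) / e (j + 1) = e j / e (j + 1) - (⌊e j / e (j + 1)⌋ : ℝ) := by
      rw [hj2, sub_div, mul_div_cancel_right₀ _ (hene (j + 1))]
    have e2 : e (j' + 2) / e (j' + 1) = e j' / e (j' + 1) - (⌊e j' / e (j' + 1)⌋ : ℝ) := by
      rw [hj'2, sub_div, mul_div_cancel_right₀ _ (hene (j' + 1))]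
    have : e (j + 2) / e (j + 1) = e (j' + 2) / e (j' + 1) := by rw [e1, e2, h]
    have h3 : (e (j + 2) / e (j + 1))⁻¹ = (e (j' + 2) / e (j' + 1))⁻¹ := by rw [this]
    rwa [inv_div, inv_div] at h3
  intro k hk
  induction k, hk using Nat.le_induction with
  | base =>
    have : n + (m - n) = m := by omega
    rw [this]; exact hlogos
  | succ k hk ih =>
    have h1 : k + 1 + (m - n) = (k + (m - n)) + 1 := by omega
    have h2 : k + 1 + (m - n) + 1 = (k + (m - n)) + 2 := by omega
    rw [h1]
    exact key k (k + (m - n)) ih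
end

section
/- (Logos Criterion, quotient form; the paper's Proposition 1(g): the anthyphairesis is eventually periodic with period from step n to step m−1.) Let a > b > 0 be real numbers and let e be the anthyphairesis remainder sequence of (a, b), with e k ≠ 0 for all k. Suppose there are indices n < m such that e n / e (n+1) = e m / e (m+1). Then the quotient sequence is eventually periodic with period m − n: for every k ≥ n, ⌊e k / e (k+1)⌋ = ⌊e (k + (m − n)) / e (k + (m − n) + 1)⌋; that is, Anth(a, b) = [I 0, …, I (n−1), period(I n, …, I (m−1))]. -/
/-- The Logos Criterion (quotient form): if two ratios of successive remainders
coincide, the quotient sequence of the anthyphairesis is eventually periodic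
with period `m - n`. -/
theorem logos_criterion_quotients
    (a b : ℝ) (hb : 0 < b) (hab : b < a) (e : ℕ → ℝ) (he : IsAnthSeq a b e)
    (hene : ∀ k : ℕ, e k ≠ 0)
    (n m : ℕ) (hnm : n < m) (hlogos : e n / e (n + 1) = e m / e (m + 1)) :
    ∀ k : ℕ, n ≤ k →
      ⌊e k / e (k + 1)⌋ = ⌊e (k + (m - n)) / e (k + (m - n) + 1)⌋ := by
  obtain ⟨h0, h1, hrec⟩ := he
  have hdiv : ∀ i : ℕ, e (i + 2) / e (i + 1) = e i / e (i + 1) - ⌊e i / e (i + 1)⌋ := by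
    intro i
    rw [(hrec i).1 (hene _)]
    rw [sub_div, mul_div_assoc, div_self (hene _), mul_one]
  set d := m - n with hd
  have key : ∀ k : ℕ, n ≤ k → e k / e (k + 1) = e (k + d) / e (k + d + 1) := by
    intro k hk
    induction k, hk using Nat.le_induction with
    | base =>
      have : n + d = m := by omega
      rw [this]; exact hlogos
    | succ k hk ih =>
      have h1' : k + 1 + d = (k + d) + 1 := by omega
      rw [h1']
      rw [show k + 1 + 1 = k + 2 from rfl]
      rw [← inv_div (e (k + 2)) (e (k + 1)), ← inv_div (e (k + d + 2)) (e (k + d + 1))]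
      congr 1
      rw [hdiv k, hdiv (k + d), ih]
  intro k hk
  rw [key k hk]
end

section
/- (Table 4, remainder computations for a² = 19b².) Let a, b be real numbers with a > 0, b > 0 and a² = 19·b², and let e be the anthyphairesis remainder sequence of (a, b) (note a > b follows from the hypotheses). Then the remainders are given by: e 2 = a − 4b, e 3 = 9b − 2a, e 4 = 3a − 13b, e 5 = 48b − 11a, e 6 = 14a − 61b, e 7 = 170b − 39a, and e 8 = 326a − 1421b. -/
private lemma le_of_sq_le' (x y : ℝ) (hx : 0 ≤ x) (hy : 0 ≤ y) (h : x ^ 2 ≤ y ^ 2) :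
    x ≤ y :=
  (pow_le_pow_iff_left₀ hx hy (by norm_num)).1 h

private lemma lt_of_sq_lt' (x y : ℝ) (hx : 0 ≤ x) (hy : 0 ≤ y) (h : x ^ 2 < y ^ 2) :
    x < y :=
  (pow_lt_pow_iff_left₀ hx hy (by norm_num)).1 h

private lemma floor_div_eq' (x y : ℝ) (k : ℤ) (hy : 0 < y) (h1 : (k : ℝ) * y ≤ x)
    (h2 : x < ((k : ℝ) + 1) * y) : ⌊x / y⌋ = k := by
  rw [Int.floor_eq_iff]
  exact ⟨(le_div_iff₀ hy).2 (by linarith), (div_lt_iff₀ hy).2 (by push_cast; linarith)⟩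

/-- Table 4: the remainders of the anthyphairesis of `a` to `b` when `a² = 19 b²`. -/
theorem anthyphairesis_sqrt19_remainders
    (a b : ℝ) (ha : 0 < a) (hb : 0 < b) (h19 : a ^ 2 = 19 * b ^ 2)
    (e : ℕ → ℝ) (he : IsAnthSeq a b e) :
    e 2 = a - 4 * b ∧ e 3 = 9 * b - 2 * a ∧ e 4 = 3 * a - 13 * b ∧
    e 5 = 48 * b - 11 * a ∧ e 6 = 14 * a - 61 * b ∧ e 7 = 170 * b - 39 * a ∧
    e 8 = 326 * a - 1421 * b := by
  obtain ⟨h0, h1, hrec⟩ := he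
  have hb2 : (0:ℝ) < b ^ 2 := by positivity
  -- the key linear inequalities, obtained by squaring
  have i1 : 4 * b < a := lt_of_sq_lt' _ _ (by positivity) ha.le (by nlinarith)
  have i2 : a < 5 * b := lt_of_sq_lt' _ _ ha.le (by positivity) (by nlinarith)
  have i3 : 2 * a < 9 * b := lt_of_sq_lt' _ _ (by positivity) (by positivity) (by nlinarith)
  have i4 : 13 * b < 3 * a := lt_of_sq_lt' _ _ (by positivity) (by positivity) (by nlinarith)
  have i5 : 5 * a < 22 * b := lt_of_sq_lt' _ _ (by positivity) (by positivity) (by nlinarith)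
  have i6 : 11 * a < 48 * b := lt_of_sq_lt' _ _ (by positivity) (by positivity) (by nlinarith)
  have i7 : 61 * b < 14 * a := lt_of_sq_lt' _ _ (by positivity) (by positivity) (by nlinarith)
  have i8 : 25 * a < 109 * b := lt_of_sq_lt' _ _ (by positivity) (by positivity) (by nlinarith)
  have i9 : 39 * a < 170 * b := lt_of_sq_lt' _ _ (by positivity) (by positivity) (by nlinarith)
  have i10 : 231 * b < 53 * a := lt_of_sq_lt' _ _ (by positivity) (by positivity) (by nlinarith)
  have i11 : 1421 * b < 326 * a := lt_of_sq_lt' _ _ (by positivity) (by positivity) (by nlinarith)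
  have i12 : 365 * a < 1591 * b := lt_of_sq_lt' _ _ (by positivity) (by positivity) (by nlinarith)
  -- step 2
  have h2 : e 2 = a - 4 * b := by
    have q : ⌊e 0 / e 1⌋ = 4 := by
      rw [h0, h1]; exact floor_div_eq' _ _ 4 hb (by push_cast; linarith) (by push_cast; linarith)
    have := (hrec 0).1 (by rw [h1]; exact hb.ne')
    rw [q, h0, h1] at this; push_cast at this; linarith
  have p2 : 0 < e 2 := by rw [h2]; linarith
  -- step 3
  have h3 : e 3 = 9 * b - 2 * a := by
    have q : ⌊e 1 / e 2⌋ = 2 := by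
      rw [h1, h2]; exact floor_div_eq' _ _ 2 (by linarith) (by push_cast; linarith)
        (by push_cast; linarith)
    have := (hrec 1).1 p2.ne'
    rw [q, h1, h2] at this; push_cast at this; linarith
  have p3 : 0 < e 3 := by rw [h3]; linarith
  -- step 4
  have h4 : e 4 = 3 * a - 13 * b := by
    have q : ⌊e 2 / e 3⌋ = 1 := by
      rw [h2, h3]; exact floor_div_eq' _ _ 1 (by rw [h3] at p3; linarith)
        (by push_cast; linarith) (by push_cast; linarith)
    have := (hrec 2).1 p3.ne'
    rw [q, h2, h3] at this; push_cast at this; linarith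
  have p4 : 0 < e 4 := by rw [h4]; linarith
  -- step 5
  have h5 : e 5 = 48 * b - 11 * a := by
    have q : ⌊e 3 / e 4⌋ = 3 := by
      rw [h3, h4]; exact floor_div_eq' _ _ 3 (by rw [h4] at p4; linarith)
        (by push_cast; linarith) (by push_cast; linarith)
    have := (hrec 3).1 p4.ne'
    rw [q, h3, h4] at this; push_cast at this; linarith
  have p5 : 0 < e 5 := by rw [h5]; linarith
  -- step 6
  have h6 : e 6 = 14 * a - 61 * b := by
    have q : ⌊e 4 / e 5⌋ = 1 := by
      rw [h4, h5]; exact floor_div_eq' _ _ 1 (by rw [h5] at p5; linarith)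
        (by push_cast; linarith) (by push_cast; linarith)
    have := (hrec 4).1 p5.ne'
    rw [q, h4, h5] at this; push_cast at this; linarith
  have p6 : 0 < e 6 := by rw [h6]; linarith
  -- step 7
  have h7 : e 7 = 170 * b - 39 * a := by
    have q : ⌊e 5 / e 6⌋ = 2 := by
      rw [h5, h6]; exact floor_div_eq' _ _ 2 (by rw [h6] at p6; linarith)
        (by push_cast; linarith) (by push_cast; linarith)
    have := (hrec 5).1 p6.ne'
    rw [q, h5, h6] at this; push_cast at this; linarith
  have p7 : 0 < e 7 := by rw [h7]; linarith
  -- step 8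
  have h8 : e 8 = 326 * a - 1421 * b := by
    have q : ⌊e 6 / e 7⌋ = 8 := by
      rw [h6, h7]; exact floor_div_eq' _ _ 8 (by rw [h7] at p7; linarith)
        (by push_cast; linarith) (by push_cast; linarith)
    have := (hrec 6).1 p7.ne'
    rw [q, h6, h7] at this; push_cast at this; linarith
  exact ⟨h2, h3, h4, h5, h6, h7, h8⟩
end

section
/- (Anthyphairesis of the diameter to the side of a square: Anth(a, b) = [1, period(2)] when a² = 2b².) Let a, b be real numbers with a > 0, b > 0 and a² = 2·b², and let e be the anthyphairesis remainder sequence of (a, b) (note b < a < 2b follows from the hypotheses). Then e n ≠ 0 for every n, ⌊e 0 / e 1⌋ = 1, and ⌊e k / e (k+1)⌋ = 2 for every k ≥ 1. -/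
namespace IsAnthSeq

variable {a b : ℝ} {e : ℕ → ℝ}

theorem eq_fract_mul (he : IsAnthSeq a b e) {n : ℕ} (hn : e (n + 1) ≠ 0) :
    e (n + 2) = Int.fract (e n / e (n + 1)) * e (n + 1) := by
  rw [(he.2.2 n).1 hn, Int.fract, sub_mul, div_mul_cancel₀ _ hn]

theorem ratio_succ (he : IsAnthSeq a b e) {n : ℕ} {r : ℝ} (hn : e (n + 1) ≠ 0)
    (hr : e n / e (n + 1) = r) (hfract : Int.fract r ≠ 0) :
    e (n + 2) ≠ 0 ∧ e (n + 1) / e (n + 2) = (Int.fract r)⁻¹ := by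
  have hstep := he.eq_fract_mul hn
  rw [hr] at hstep
  refine ⟨hstep ▸ mul_ne_zero hfract hn, ?_⟩
  rw [hstep, div_mul_cancel_right₀ hn]

theorem ratio_eq_of_inv_fract_eq (he : IsAnthSeq a b e) {m : ℕ} {r : ℝ}
    (hfract : Int.fract r ≠ 0) (hfixed : (Int.fract r)⁻¹ = r) (hm : e (m + 1) ≠ 0)
    (hr : e m / e (m + 1) = r) :
    ∀ n, m ≤ n → e (n + 1) ≠ 0 ∧ e n / e (n + 1) = r := by
  intro n hmn
  induction n, hmn using Nat.le_induction with
  | base => exact ⟨hm, hr⟩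
  | succ n _ ih =>
    obtain ⟨hne, hratio⟩ := he.ratio_succ ih.1 ih.2 hfract
    exact ⟨hne, hratio.trans hfixed⟩

end IsAnthSeq

theorem div_eq_sqrt_two_of_sq_eq {a b : ℝ} (ha : 0 ≤ a) (hb : 0 < b) (h2 : a ^ 2 = 2 * b ^ 2) :
    a / b = √2 := by
  rw [← Real.sqrt_sq (div_nonneg ha hb.le), div_pow, h2, mul_div_cancel_right₀ _ (by positivity)]

namespace Real

theorem floor_sqrt_two : ⌊√2⌋ = 1 := by
  rw [Int.floor_eq_iff]
  exact ⟨by exact_mod_cast one_lt_sqrt_two.le, by push_cast; linarith [sqrt_two_lt_three_halves]⟩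

theorem floor_sqrt_two_add_one : ⌊√2 + 1⌋ = 2 := by
  rw [Int.floor_add_one, floor_sqrt_two]; rfl

theorem fract_sqrt_two : Int.fract √2 = √2 - 1 := by
  rw [Int.fract, floor_sqrt_two, Int.cast_one]

theorem fract_sqrt_two_add_one : Int.fract (√2 + 1) = √2 - 1 := by
  rw [Int.fract_add_one, fract_sqrt_two]

end Real

/-- The anthyphairesis of the diameter to the side of a square:
`Anth(a, b) = [1, period(2)]` when `a² = 2 b²`. -/
theorem anthyphairesis_sqrt2
    (a b : ℝ) (ha : 0 < a) (hb : 0 < b) (h2 : a ^ 2 = 2 * b ^ 2)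
    (e : ℕ → ℝ) (he : IsAnthSeq a b e) :
    (∀ n : ℕ, e n ≠ 0) ∧ ⌊e 0 / e 1⌋ = 1 ∧
    (∀ k : ℕ, 1 ≤ k → ⌊e k / e (k + 1)⌋ = 2) := by
  have h0 : e 0 = a := he.1
  have h1 : e 1 = b := he.2.1
  have hfract : √2 - 1 ≠ 0 := sub_ne_zero.2 Real.one_lt_sqrt_two.ne'
  have he1 : e 1 ≠ 0 := h1 ▸ hb.ne'
  have hr0 : e 0 / e 1 = √2 := h0 ▸ h1 ▸ div_eq_sqrt_two_of_sq_eq ha.le hb h2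
  obtain ⟨he2, hr1⟩ := he.ratio_succ he1 hr0 (Real.fract_sqrt_two ▸ hfract)
  rw [Real.fract_sqrt_two, Real.inv_sqrt_two_sub_one] at hr1
  have hlater := he.ratio_eq_of_inv_fract_eq (Real.fract_sqrt_two_add_one ▸ hfract)
    (by rw [Real.fract_sqrt_two_add_one, Real.inv_sqrt_two_sub_one]) he2 hr1
  refine ⟨?_, by rw [hr0, Real.floor_sqrt_two], fun k hk => ?_⟩
  · rintro (_ | _ | n)
    · exact h0 ▸ ha.ne'
    · exact he1
    · exact (hlater (n + 1) (by omega)).1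
  · rw [(hlater k hk).2, Real.floor_sqrt_two_add_one]
end

section
/- (Side and diameter numbers approximate the ratio of the diameter to the side: the convergents d n / s n tend to √2.) Define integer sequences s, d : ℕ → ℤ by s 0 = 1, d 0 = 1, s (n+1) = s n + d n, and d (n+1) = 2 * s n + d n. Then 0 < s n for all n, and the sequence of ratios (d n : ℝ) / (s n : ℝ) converges to Real.sqrt 2 as n → ∞. -/
/-- Side and diameter numbers approximate the ratio of the diameter to the
side of a square: the convergents `d n / s n` tend to `√2`. -/
theorem side_diameter_converge_sqrt2
    (s d : ℕ → ℤ) (hs0 : s 0 = 1) (hd0 : d 0 = 1)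
    (hs : ∀ n : ℕ, s (n + 1) = s n + d n)
    (hd : ∀ n : ℕ, d (n + 1) = 2 * s n + d n) :
    (∀ n : ℕ, 0 < s n) ∧
    Filter.Tendsto (fun n : ℕ => (d n : ℝ) / (s n : ℝ)) Filter.atTop
      (nhds (Real.sqrt 2)) := by
  -- positivity of both sequences
  have hpos : ∀ n : ℕ, 0 < s n ∧ 0 < d n := by
    intro n
    induction n with
    | zero => simp [hs0, hd0]
    | succ k ih => constructor <;> [rw [hs k]; rw [hd k]] <;> linarith [ih.1, ih.2]
  -- lower bound s n ≥ n + 1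
  have hlb : ∀ n : ℕ, (n : ℤ) + 1 ≤ s n := by
    intro n
    induction n with
    | zero => simp [hs0]
    | succ k ih =>
      rw [hs k]
      have := (hpos k).2
      push_cast
      linarith
  -- key invariant
  have hinv : ∀ n : ℕ, (d n) ^ 2 - 2 * (s n) ^ 2 = (-1 : ℤ) ^ (n + 1) := by
    intro n
    induction n with
    | zero => simp [hs0, hd0]
    | succ k ih =>
      rw [hs k, hd k, pow_succ]
      ring_nf
      ring_nf at ih
      linarith
  refine ⟨fun n => (hpos n).1, ?_⟩
  have sqrt2_pos : (0 : ℝ) < Real.sqrt 2 := Real.sqrt_pos.2 (by norm_num)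
  have key : ∀ n : ℕ, |(d n : ℝ) / (s n : ℝ) - Real.sqrt 2| ≤ 1 / ((n : ℝ) + 1) := by
    intro n
    have hS : (0 : ℝ) < (s n : ℝ) := by exact_mod_cast (hpos n).1
    have hD : (0 : ℝ) < (d n : ℝ) := by exact_mod_cast (hpos n).2
    have hSn : ((n : ℝ) + 1) ≤ (s n : ℝ) := by exact_mod_cast hlb n
    have hinvR : |(d n : ℝ) ^ 2 - 2 * (s n : ℝ) ^ 2| = 1 := by
      have := hinv n
      have : ((d n : ℝ)) ^ 2 - 2 * (s n : ℝ) ^ 2 = (-1 : ℝ) ^ (n + 1) := by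
        exact_mod_cast congrArg (fun z : ℤ => (z : ℝ)) this
      rw [this, abs_pow, abs_neg, abs_one, one_pow]
    have hsq : Real.sqrt 2 ^ 2 = 2 := Real.sq_sqrt (by norm_num)
    have factored : (d n : ℝ) ^ 2 - 2 * (s n : ℝ) ^ 2 =
        ((d n : ℝ) - (s n : ℝ) * Real.sqrt 2) * ((d n : ℝ) + (s n : ℝ) * Real.sqrt 2) := by
      have : ((d n : ℝ) - (s n : ℝ) * Real.sqrt 2) * ((d n : ℝ) + (s n : ℝ) * Real.sqrt 2)
          = (d n : ℝ) ^ 2 - (s n : ℝ) ^ 2 * (Real.sqrt 2 ^ 2) := by ring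
      rw [this, hsq]; ring
    have hplus : (s n : ℝ) ≤ (d n : ℝ) + (s n : ℝ) * Real.sqrt 2 := by
      nlinarith [Real.sqrt_le_sqrt (show (1:ℝ) ≤ 2 by norm_num), Real.sqrt_one]
    have habs : |(d n : ℝ) - (s n : ℝ) * Real.sqrt 2| * ((d n : ℝ) + (s n : ℝ) * Real.sqrt 2) = 1 := by
      have hp : (0 : ℝ) < (d n : ℝ) + (s n : ℝ) * Real.sqrt 2 := by positivity
      calc |(d n : ℝ) - (s n : ℝ) * Real.sqrt 2| * ((d n : ℝ) + (s n : ℝ) * Real.sqrt 2)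
          = |((d n : ℝ) - (s n : ℝ) * Real.sqrt 2) * ((d n : ℝ) + (s n : ℝ) * Real.sqrt 2)| := by
            rw [abs_mul, abs_of_pos hp]
        _ = 1 := by rw [← factored, hinvR]
    have hnum : |(d n : ℝ) - (s n : ℝ) * Real.sqrt 2| ≤ 1 / (s n : ℝ) := by
      rw [le_div_iff₀ hS]
      calc |(d n : ℝ) - (s n : ℝ) * Real.sqrt 2| * (s n : ℝ)
          ≤ |(d n : ℝ) - (s n : ℝ) * Real.sqrt 2| * ((d n : ℝ) + (s n : ℝ) * Real.sqrt 2) :=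
            mul_le_mul_of_nonneg_left hplus (abs_nonneg _)
        _ = 1 := habs
    have heq : (d n : ℝ) / (s n : ℝ) - Real.sqrt 2
        = ((d n : ℝ) - (s n : ℝ) * Real.sqrt 2) / (s n : ℝ) := by
      field_simp
    rw [heq, abs_div, abs_of_pos hS, div_le_div_iff₀ hS (by positivity)]
    calc |(d n : ℝ) - (s n : ℝ) * Real.sqrt 2| * ((n : ℝ) + 1)
        ≤ |(d n : ℝ) - (s n : ℝ) * Real.sqrt 2| * (s n : ℝ) :=
          mul_le_mul_of_nonneg_left hSn (abs_nonneg _)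
      _ ≤ (1 / (s n : ℝ)) * (s n : ℝ) := mul_le_mul_of_nonneg_right hnum hS.le
      _ = 1 := one_div_mul_cancel hS.ne'
      _ ≤ 1 * (s n : ℝ) := by nlinarith
  have h0 : Filter.Tendsto (fun n : ℕ => (d n : ℝ) / (s n : ℝ) - Real.sqrt 2)
      Filter.atTop (nhds 0) := by
    exact squeeze_zero_norm (fun n => by simpa [Real.norm_eq_abs] using key n)
      tendsto_one_div_add_atTop_nhds_zero_nat
  have := h0.add_const (Real.sqrt 2)
  simpa using this
end

section
/- (Converse periodicity: an eventually periodic anthyphairesis arises only from a quadratic irrational ratio.) Let a > b > 0 be real numbers and let e be the anthyphairesis remainder sequence of (a, b), with e n ≠ 0 for all n. Suppose the quotient sequence is eventually periodic: there exist N : ℕ and p : ℕ with 0 < p such that for every k ≥ N, ⌊e (k + p) / e (k + p + 1)⌋ = ⌊e k / e (k+1)⌋. Then the ratio x = a / b is a quadratic irrational: x is irrational and there exist integers A, B, C with A ≠ 0 and A*x² + B*x + C = 0. -/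
open GenContFract Int

lemma aux_quad (x : ℕ → ℝ) (hx1 : ∀ n, 1 < x n)
    (hfr : ∀ n, Int.fract (x n) = (x (n + 1))⁻¹)
    (N p : ℕ) (hp : 0 < p)
    (hper : ∀ k : ℕ, N ≤ k → ⌊x (k + p)⌋ = ⌊x k⌋) :
    Irrational (x 0) ∧
    ∃ A B C : ℤ, A ≠ 0 ∧
      (A : ℝ) * (x 0) ^ 2 + (B : ℝ) * (x 0) + (C : ℝ) = 0 := by
  have hxpos : ∀ n, 0 < x n := fun n => lt_trans one_pos (hx1 n)
  have hxne : ∀ n, x n ≠ 0 := fun n => (hxpos n).ne'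
  have hfrne : ∀ n, Int.fract (x n) ≠ 0 := by
    intro n; rw [hfr]; exact inv_ne_zero (hxne _)
  have hfloor1 : ∀ n, 1 ≤ ⌊x n⌋ := fun n => by
    exact_mod_cast Int.le_floor.mpr (by exact_mod_cast (hx1 n).le)
  have hxeq : ∀ n, x n = (⌊x n⌋ : ℝ) + (x (n + 1))⁻¹ := by
    intro n
    have := Int.floor_add_fract (x n)
    rw [hfr] at this
    linarith
  -- the s-sequence of the continued fraction of `x k`
  have hs : ∀ (n k : ℕ), (GenContFract.of (x k)).s.get? n = some ⟨1, ⌊x (k + n + 1)⌋⟩ := by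
    intro n
    induction n with
    | zero =>
      intro k
      have := GenContFract.of_s_head (v := x k) (hfrne k)
      rw [hfr, inv_inv] at this
      exact this
    | succ n ih =>
      intro k
      rw [GenContFract.of_s_succ, hfr, inv_inv, ih (k + 1)]
      norm_num [show k + 1 + n + 1 = k + (n + 1) + 1 by ring]
  -- equality of continued fractions
  have hof : GenContFract.of (x N) = GenContFract.of (x (N + p)) := by
    ext1
    · rw [GenContFract.of_h_eq_floor, GenContFract.of_h_eq_floor]
      exact_mod_cast (hper N le_rfl).symm
    · apply Stream'.Seq.ext
      intro n
      rw [hs n N, hs n (N + p)]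
      have := hper (N + n + 1) (by omega)
      rw [show N + n + 1 + p = N + p + n + 1 by ring] at this
      rw [this]
  have heq : x (N + p) = x N := by
    have h1 := GenContFract.of_convergence (x N)
    have h2 := GenContFract.of_convergence (x (N + p))
    rw [hof] at h1
    exact tendsto_nhds_unique h2 h1
  -- irrationality of x N
  have hirrN : Irrational (x N) := by
    intro ⟨q, hq⟩
    obtain ⟨n, hn⟩ := (GenContFract.terminates_iff_rat (x N)).mpr ⟨q, hq.symm⟩
    have hn' : (GenContFract.of (x N)).s.get? n = none := hn
    rw [hs n N] at hn'
    exact Option.some_ne_none _ hn'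
  -- Möbius induction: express x (N + (p - j)) as a Möbius transform of x N
  have key : ∀ j, 1 ≤ j → j ≤ p →
      ∃ A B C D : ℤ, 1 ≤ A ∧ 0 ≤ B ∧ 1 ≤ C ∧ 0 ≤ D ∧
        x (N + (p - j)) * ((C : ℝ) * x N + D) = (A : ℝ) * x N + B := by
    intro j h1
    induction j, h1 using Nat.le_induction with
    | base =>
      intro _
      refine ⟨⌊x (N + (p - 1))⌋, 1, 1, 0, hfloor1 _, zero_le_one, le_refl 1, le_refl 0, ?_⟩
      have h := hxeq (N + (p - 1))
      rw [show N + (p - 1) + 1 = N + p from by omega, heq] at h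
      push_cast
      linear_combination x N * h + inv_mul_cancel₀ (hxne N)
    | succ j hj ih =>
      intro hjp
      obtain ⟨A, B, C, D, hA, hB, hC, hD, heqj⟩ := ih (by omega)
      have hq := hfloor1 (N + (p - (j + 1)))
      have h := hxeq (N + (p - (j + 1)))
      rw [show N + (p - (j + 1)) + 1 = N + (p - j) from by omega] at h
      have key2 : (x (N + (p - j)))⁻¹ * ((A : ℝ) * x N + B) = (C : ℝ) * x N + D := by
        rw [← heqj, inv_mul_cancel_left₀ (hxne _)]
      refine ⟨⌊x (N + (p - (j + 1)))⌋ * A + C, ⌊x (N + (p - (j + 1)))⌋ * B + D, A, B,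
        ?_, ?_, hA, hB, ?_⟩
      · nlinarith
      · nlinarith
      · push_cast
        linear_combination ((A : ℝ) * x N + (B : ℝ)) * h + key2
  obtain ⟨A0, B0, C0, D0, hA0, hB0, hC0, hD0, heqp⟩ := key p hp le_rfl
  rw [show N + (p - p) = N from by omega] at heqp
  have hqN : ∃ A B C : ℤ, A ≠ 0 ∧
      (A : ℝ) * (x N) ^ 2 + (B : ℝ) * (x N) + (C : ℝ) = 0 :=
    ⟨C0, D0 - A0, -B0, by omega, by push_cast; linear_combination heqp⟩
  -- propagation downward
  have step : ∀ k, (Irrational (x (k + 1)) ∧ ∃ A B C : ℤ, A ≠ 0 ∧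
        (A : ℝ) * (x (k + 1)) ^ 2 + (B : ℝ) * (x (k + 1)) + (C : ℝ) = 0) →
      (Irrational (x k) ∧ ∃ A B C : ℤ, A ≠ 0 ∧
        (A : ℝ) * (x k) ^ 2 + (B : ℝ) * (x k) + (C : ℝ) = 0) := by
    rintro k ⟨hirr, A, B, C, hA, hq⟩
    set m := ⌊x k⌋ with hm
    have hufr : Int.fract (x k) = x k - m := rfl
    have hu' : x (k + 1) * (x k - (m : ℝ)) = 1 := by
      rw [← hufr, hfr]
      exact mul_inv_cancel₀ (hxne _)
    have hinv : x (k + 1) = (x k - (m : ℝ))⁻¹ := by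
      rw [← hufr, hfr, inv_inv]
    have hxkirr : Irrational (x k) := by
      by_contra hcon
      obtain ⟨q, hq'⟩ := not_not.mp hcon
      apply hirr
      refine ⟨(q - m)⁻¹, ?_⟩
      rw [hinv, ← hq']
      push_cast
      ring
    have h2 : (A : ℝ) + B * (x k - m) + C * (x k - m) ^ 2 = 0 := by
      linear_combination (x k - (m : ℝ)) ^ 2 * hq -
        ((A : ℝ) * (x (k + 1) * (x k - m) + 1) + B * (x k - m)) * hu'
    rcases eq_or_ne C 0 with hC0' | hC0'
    · exfalso
      rcases eq_or_ne B 0 with hB0' | hB0'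
      · apply hA
        rw [hC0', hB0'] at h2
        push_cast at h2
        exact_mod_cast (by linarith : (A : ℝ) = 0)
      · apply hxkirr
        refine ⟨(m : ℚ) - A / B, ?_⟩
        have hB' : (B : ℝ) ≠ 0 := by exact_mod_cast hB0'
        rw [hC0'] at h2
        push_cast at h2 ⊢
        field_simp
        first
          | linear_combination (-2 : ℝ) * h2
          | linear_combination h2
          | linear_combination (2 : ℝ) * h2
          | linear_combination (-1 : ℝ) * h2
    · exact ⟨hxkirr, C, B - 2 * C * m, A - B * m + C * m ^ 2, hC0',
        by push_cast; linear_combination h2⟩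
  have main : ∀ j, Irrational (x (N - j)) ∧ ∃ A B C : ℤ, A ≠ 0 ∧
      (A : ℝ) * (x (N - j)) ^ 2 + (B : ℝ) * (x (N - j)) + (C : ℝ) = 0 := by
    intro j
    induction j with
    | zero => exact ⟨hirrN, hqN⟩
    | succ j ih =>
      rcases le_or_gt N j with h | h
      · rw [show N - (j + 1) = N - j from by omega]
        exact ih
      · have hh : N - j = (N - (j + 1)) + 1 := by omega
        rw [hh] at ih
        exact step _ ih
  have hfin := main N
  rw [Nat.sub_self] at hfin
  exact hfin


/-- Converse periodicity: an eventually periodic (infinite) anthyphairesis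
arises only from a quadratic irrational ratio. -/
theorem eventually_periodic_quadratic_irrational
    (a b : ℝ) (hb : 0 < b) (hab : b < a)
    (e : ℕ → ℝ) (he : IsAnthSeq a b e) (hene : ∀ n : ℕ, e n ≠ 0)
    (N p : ℕ) (hp : 0 < p)
    (hper : ∀ k : ℕ, N ≤ k →
      ⌊e (k + p) / e (k + p + 1)⌋ = ⌊e k / e (k + 1)⌋) :
    Irrational (a / b) ∧
    ∃ A B C : ℤ, A ≠ 0 ∧
      (A : ℝ) * (a / b) ^ 2 + (B : ℝ) * (a / b) + (C : ℝ) = 0 := by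
  obtain ⟨h0, h1, hrec⟩ := he
  have herec : ∀ n, e (n + 2) = e n - (⌊e n / e (n + 1)⌋ : ℝ) * e (n + 1) :=
    fun n => (hrec n).1 (hene (n + 1))
  have hPQ : ∀ n, 0 < e (n + 1) ∧ e (n + 1) < e n := by
    intro n
    induction n with
    | zero =>
      rw [h0, h1]
      exact ⟨hb, hab⟩
    | succ n ih =>
      obtain ⟨h1', h2'⟩ := ih
      have h0' : 0 < e n := lt_trans h1' h2'
      have hfr0 : e (n + 2) = Int.fract (e n / e (n + 1)) * e (n + 1) := by
        rw [herec n, ← Int.self_sub_floor]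
        field_simp
      have hfrne0 : Int.fract (e n / e (n + 1)) ≠ 0 := by
        intro hcon
        apply hene (n + 2)
        rw [hfr0, hcon, zero_mul]
      have hfrpos : 0 < Int.fract (e n / e (n + 1)) :=
        lt_of_le_of_ne (Int.fract_nonneg _) (Ne.symm hfrne0)
      constructor
      · rw [hfr0]
        exact mul_pos hfrpos h1'
      · rw [hfr0]
        have hlt := Int.fract_lt_one (e n / e (n + 1))
        nlinarith
  have hepos : ∀ n, 0 < e n := by
    intro n
    cases n with
    | zero => exact lt_trans (hPQ 0).1 (hPQ 0).2
    | succ n => exact (hPQ n).1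
  have hx1 : ∀ n, 1 < e n / e (n + 1) := fun n =>
    (one_lt_div (hPQ n).1).mpr (hPQ n).2
  have hfr : ∀ n, Int.fract (e n / e (n + 1)) = (e (n + 1) / e (n + 2))⁻¹ := by
    intro n
    rw [inv_div, herec n, sub_div, mul_div_cancel_right₀ _ (hene (n + 1)), Int.self_sub_floor]
  have hmain := aux_quad (fun n => e n / e (n + 1)) hx1 hfr N p hp hper
  simpa [h0, h1] using hmain
end

section
/- (Palindromic periodicity of the anthyphairesis of √N to 1, the theorem the paper identifies as Theaetetus' discovery in Theaetetus 147c–148b.) Let N : ℕ with 2 ≤ N and N not a perfect square, and let e be the anthyphairesis remainder sequence of (Real.sqrt N, 1). Then e n ≠ 0 for all n, and there exists n : ℕ with 1 ≤ n such that, writing I k = ⌊e k / e (k+1)⌋: (i) for every k ≥ 1, I (k + n) = I k (periodicity with period n from the first step); (ii) I n = 2 * I 0 (the last quotient of the period is double the initial quotient); and (iii) for every j with 1 ≤ j and j < n, I j = I (n − j) (the period without its final term is a palindrome). -/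
lemma IsAnthSeq.succ_pos_and_ratio_eq {a b : ℝ} {e : ℕ → ℝ} (he : IsAnthSeq a b e)
    (hb : 0 < b) {x : ℕ → ℝ} (hx₀ : x 0 = a / b) (hx : ∀ k, x (k + 1) = (Int.fract (x k))⁻¹)
    (hirr : ∀ k, Irrational (x k)) (k : ℕ) :
    0 < e (k + 1) ∧ e k / e (k + 1) = x k := by
  obtain ⟨he₀, he₁, hrec⟩ := he
  induction k with
  | zero => exact ⟨he₁ ▸ hb, by rw [he₀, he₁, hx₀]⟩
  | succ k ih =>
    obtain ⟨hpos, hdiv⟩ := ih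
    have hfract : 0 < Int.fract (x k) := Int.fract_pos.mpr ((hirr k).ne_int _)
    have hnext : e (k + 2) = e (k + 1) * Int.fract (x k) := by
      rw [(hrec k).1 hpos.ne', hdiv, Int.fract, ← hdiv]
      field_simp
    refine ⟨hnext ▸ mul_pos hpos hfract, ?_⟩
    rw [hnext, hx, div_mul_cancel_left₀ hpos.ne', inv_eq_one_div]

namespace SqrtCF

noncomputable def value (N : ℕ) (s : ℤ × ℤ) : ℝ := (s.1 + √N) / s.2

noncomputable def conj (N : ℕ) (s : ℤ × ℤ) : ℝ := (s.1 - √N) / s.2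

noncomputable def next (N : ℕ) (s : ℤ × ℤ) : ℤ × ℤ :=
  (⌊value N s⌋ * s.2 - s.1, (N - (⌊value N s⌋ * s.2 - s.1) ^ 2) / s.2)

noncomputable def orbit (N k : ℕ) : ℤ × ℤ := (next N)^[k] (0, 1)

def IsReduced (N : ℕ) (s : ℤ × ℤ) : Prop :=
  s.2 ∣ N - s.1 ^ 2 ∧ 1 < value N s ∧ -1 < conj N s ∧ conj N s < 0

noncomputable def reverse (N : ℕ) (s : ℤ × ℤ) : ℤ × ℤ := ((next N s).1, s.2)

variable {N : ℕ} {s t : ℤ × ℤ}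

lemma value_sub_conj : value N s - conj N s = 2 * √N / s.2 := by
  unfold value conj; ring

lemma value_add_conj : value N s + conj N s = 2 * s.1 / s.2 := by
  unfold value conj; ring

lemma snd_pos_of_conj_lt_value (h : conj N s < value N s) : 0 < s.2 := by
  have h₀ : 0 < 2 * √N / s.2 := by rw [← value_sub_conj]; linarith
  rcases div_pos_iff.mp h₀ with ⟨-, hQ⟩ | ⟨hx, -⟩
  · exact_mod_cast hQ
  · linarith [Real.sqrt_nonneg N]

lemma eq_of_value_eq_of_conj_eq (hs : conj N s < value N s) (hv : value N s = value N t)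
    (hc : conj N s = conj N t) : s = t := by
  have hQs : (0 : ℝ) < s.2 := by exact_mod_cast snd_pos_of_conj_lt_value hs
  have hQt : (0 : ℝ) < t.2 := by exact_mod_cast snd_pos_of_conj_lt_value (hv ▸ hc ▸ hs)
  have hx : 0 < √N := by
    have h : 0 < 2 * √N / s.2 := by rw [← value_sub_conj]; linarith
    linarith [(div_pos_iff_of_pos_right hQs).mp h]
  have hQ : (s.2 : ℝ) = t.2 := by
    have h := (value_sub_conj (s := s)).symm.trans (hv ▸ hc ▸ value_sub_conj (s := t))
    field_simp at h
    nlinarith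
  have hP : (s.1 : ℝ) = t.1 := by
    have h := (value_add_conj (s := s)).symm.trans (hv ▸ hc ▸ value_add_conj (s := t))
    rw [hQ] at h
    field_simp at h
    linarith
  exact Prod.ext (by exact_mod_cast hP) (by exact_mod_cast hQ)

lemma IsReduced.conj_lt_value (hs : IsReduced N s) : conj N s < value N s := by
  linarith [hs.2.1, hs.2.2.2]

lemma IsReduced.snd_pos (hs : IsReduced N s) : 0 < s.2 :=
  snd_pos_of_conj_lt_value hs.conj_lt_value

lemma IsReduced.mem_Icc (hs : IsReduced N s) :
    s.1 ∈ Set.Icc 0 ⌈2 * √(N : ℝ)⌉ ∧ s.2 ∈ Set.Icc 0 ⌈2 * √(N : ℝ)⌉ := by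
  have hQ : (0 : ℝ) < s.2 := by exact_mod_cast hs.snd_pos
  obtain ⟨-, hv, hc₁, hc₂⟩ := hs
  have hP₀ : (0 : ℝ) < s.1 := by
    have h : 0 < 2 * (s.1 : ℝ) / s.2 := by rw [← value_add_conj]; linarith
    linarith [(div_pos_iff_of_pos_right hQ).mp h]
  have hPx : (s.1 : ℝ) < √N := by
    rw [conj, div_lt_iff₀ hQ] at hc₂; linarith
  have hQx : (s.2 : ℝ) < 2 * √N := by
    have h : 1 < 2 * √N / s.2 := by rw [← value_sub_conj]; linarith
    exact (one_lt_div hQ).mp h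
  have hceil := Int.le_ceil (2 * √(N : ℝ))
  refine ⟨⟨by exact_mod_cast hP₀.le, ?_⟩, ⟨by exact_mod_cast hQ.le, ?_⟩⟩
  · exact (Int.cast_le (R := ℝ)).mp (by linarith [Real.sqrt_nonneg N])
  · exact (Int.cast_le (R := ℝ)).mp (by linarith)

lemma setOf_isReduced_finite : {s | IsReduced N s}.Finite :=
  ((Set.finite_Icc _ _).prod (Set.finite_Icc _ _)).subset fun _ hs => hs.mem_Icc

lemma next_fst : (next N s).1 = ⌊value N s⌋ * s.2 - s.1 := rfl

lemma next_snd_mul_snd (h : s.2 ∣ N - s.1 ^ 2) :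
    (next N s).2 * s.2 = N - (next N s).1 ^ 2 := by
  refine Int.ediv_mul_cancel ?_
  have e : (N : ℤ) - (⌊value N s⌋ * s.2 - s.1) ^ 2
      = N - s.1 ^ 2 + s.2 * (2 * ⌊value N s⌋ * s.1 - ⌊value N s⌋ ^ 2 * s.2) := by
    ring
  rw [e]
  exact dvd_add h (dvd_mul_right _ _)

lemma snd_dvd_next (h : s.2 ∣ N - s.1 ^ 2) : (next N s).2 ∣ N - (next N s).1 ^ 2 :=
  ⟨s.2, (next_snd_mul_snd h).symm⟩

lemma orbit_succ (k : ℕ) : orbit N (k + 1) = next N (orbit N k) :=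
  Function.iterate_succ_apply' _ _ _

lemma value_orbit_zero : value N (orbit N 0) = √N := by simp [orbit, value]

lemma conj_orbit_zero : conj N (orbit N 0) = -√N := by simp [orbit, conj]

lemma orbit_snd_dvd (k : ℕ) : (orbit N k).2 ∣ N - (orbit N k).1 ^ 2 := by
  induction k with
  | zero => exact one_dvd _
  | succ k ih => rw [orbit_succ]; exact snd_dvd_next ih

lemma orbit_add_of_isPeriodicPt {n : ℕ} (hper : Function.IsPeriodicPt (next N) n (orbit N 1))
    {k : ℕ} (hk : 1 ≤ k) : orbit N (k + n) = orbit N k := by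
  obtain ⟨j, rfl⟩ := Nat.exists_eq_add_of_le' hk
  have h := congrArg (next N)^[j] hper.eq
  simp only [orbit, ← Function.iterate_add_apply] at h ⊢
  rwa [show j + 1 + n = j + (n + 1) by omega]

lemma value_reverse (hQ : s.2 ≠ 0) : value N (reverse N s) = ⌊value N s⌋ - conj N s := by
  have hQ' : (s.2 : ℝ) ≠ 0 := by exact_mod_cast hQ
  simp only [value, conj, reverse, next_fst]
  push_cast
  field_simp
  ring

lemma conj_reverse (hQ : s.2 ≠ 0) : conj N (reverse N s) = -Int.fract (value N s) := by
  have hQ' : (s.2 : ℝ) ≠ 0 := by exact_mod_cast hQ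
  rw [Int.fract]
  simp only [value, conj, reverse, next_fst]
  push_cast
  field_simp
  ring

lemma IsReduced.floor_value_reverse (hs : IsReduced N s) :
    ⌊value N (reverse N s)⌋ = ⌊value N s⌋ := by
  rw [value_reverse hs.snd_pos.ne', sub_eq_add_neg, Int.floor_intCast_add, add_eq_left,
    Int.floor_eq_zero_iff]
  exact ⟨by linarith [hs.2.2.2], by linarith [hs.2.2.1]⟩

lemma next_reverse_next (hs : IsReduced N (next N s)) (h : s.2 ∣ N - s.1 ^ 2) :
    next N (reverse N (next N s)) = reverse N s := by
  have hP : (next N (reverse N (next N s))).1 = (next N s).1 := by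
    rw [next_fst, hs.floor_value_reverse]
    simp only [reverse, next_fst]
    ring
  ext
  · exact hP
  · change (N - (next N (reverse N (next N s))).1 ^ 2) / (next N s).2 = s.2
    rw [hP, ← next_snd_mul_snd h, Int.mul_ediv_cancel_left _ hs.snd_pos.ne']

lemma floor_value_reverse_orbit_zero :
    ⌊value N (reverse N (orbit N 0))⌋ = 2 * ⌊value N (orbit N 0)⌋ := by
  rw [value_reverse one_ne_zero, conj_orbit_zero, value_orbit_zero, sub_neg_eq_add,
    Int.floor_intCast_add]
  ring

lemma next_reverse_orbit_zero : next N (reverse N (orbit N 0)) = orbit N 1 := by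
  have hP : (next N (reverse N (orbit N 0))).1 = (orbit N 1).1 := by
    rw [next_fst, floor_value_reverse_orbit_zero, orbit_succ, next_fst]
    simp only [reverse, next_fst, orbit, Function.iterate_zero, id]
    ring
  ext
  · exact hP
  · change (N - (next N (reverse N (orbit N 0))).1 ^ 2) / 1 = (N - (orbit N 1).1 ^ 2) / 1
    rw [hP]

section Irrational

variable (hirr : Irrational √(N : ℝ))
include hirr

lemma one_lt_sqrt_of_irrational : 1 < √(N : ℝ) := by
  refine Real.lt_sqrt_of_sq_lt ?_
  by_contra! hN
  have : N ≤ 1 := by exact_mod_cast (one_pow (M := ℝ) 2) ▸ hN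
  interval_cases N <;> simp at hirr

lemma natCast_ne_sq (m : ℤ) : (N : ℤ) ≠ m ^ 2 := by
  intro h
  apply hirr.ne_int |m|
  rw [show (N : ℝ) = ((m ^ 2 : ℤ) : ℝ) by exact_mod_cast h]
  push_cast
  exact Real.sqrt_sq_eq_abs _

lemma snd_ne_zero (h : s.2 ∣ N - s.1 ^ 2) : s.2 ≠ 0 := by
  rintro hQ
  rw [hQ, zero_dvd_iff, sub_eq_zero] at h
  exact natCast_ne_sq hirr _ h

lemma irrational_value (h : s.2 ∣ N - s.1 ^ 2) : Irrational (value N s) :=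
  (hirr.intCast_add s.1).div_intCast (snd_ne_zero hirr h)

lemma fract_value_pos (h : s.2 ∣ N - s.1 ^ 2) : 0 < Int.fract (value N s) :=
  Int.fract_pos.mpr ((irrational_value hirr h).ne_int _)

lemma value_next (h : s.2 ∣ N - s.1 ^ 2) :
    value N (next N s) = (Int.fract (value N s))⁻¹ := by
  have hQ : (s.2 : ℝ) ≠ 0 := by exact_mod_cast snd_ne_zero hirr h
  have hQ' : ((next N s).2 : ℝ) ≠ 0 := by exact_mod_cast snd_ne_zero hirr (snd_dvd_next h)
  have hrel : ((next N s).2 : ℝ) * s.2 = N - ((next N s).1 : ℝ) ^ 2 := by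
    exact_mod_cast next_snd_mul_snd h
  have hfract : Int.fract (value N s) = (√N - (next N s).1) / s.2 := by
    rw [Int.fract, next_fst, value]; push_cast; field_simp; ring
  have hne : √N - (next N s).1 ≠ 0 := sub_ne_zero.mpr (hirr.ne_int _)
  rw [hfract, inv_div, value, div_eq_div_iff hQ' hne]
  linear_combination (Real.sq_sqrt (Nat.cast_nonneg N)) - hrel

lemma conj_next (h : s.2 ∣ N - s.1 ^ 2) :
    conj N (next N s) = (conj N s - ⌊value N s⌋)⁻¹ := by
  have hQ : (s.2 : ℝ) ≠ 0 := by exact_mod_cast snd_ne_zero hirr h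
  have hQ' : ((next N s).2 : ℝ) ≠ 0 := by exact_mod_cast snd_ne_zero hirr (snd_dvd_next h)
  have hrel : ((next N s).2 : ℝ) * s.2 = N - ((next N s).1 : ℝ) ^ 2 := by
    exact_mod_cast next_snd_mul_snd h
  have hsub : conj N s - ⌊value N s⌋ = (-√N - (next N s).1) / s.2 := by
    rw [next_fst, conj]; push_cast; field_simp; ring
  have hne : -√N - (next N s).1 ≠ 0 := by
    rw [sub_ne_zero, Ne, neg_eq_iff_eq_neg, ← Int.cast_neg]; exact hirr.ne_int _
  rw [hsub, inv_div, conj, div_eq_div_iff hQ' hne]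
  linear_combination (Real.sq_sqrt (Nat.cast_nonneg N)) - hrel

lemma isReduced_next (h : s.2 ∣ N - s.1 ^ 2) (hv : 1 < value N s) (hc : conj N s < 0) :
    IsReduced N (next N s) := by
  have hfloor : (1 : ℝ) ≤ ⌊value N s⌋ := by
    exact_mod_cast Int.le_floor.mpr (by exact_mod_cast hv.le)
  have hsub : conj N s - ⌊value N s⌋ < -1 := by linarith
  refine ⟨snd_dvd_next h, ?_, ?_, ?_⟩
  · rw [value_next hirr h]
    exact one_lt_inv_iff₀.mpr ⟨fract_value_pos hirr h, Int.fract_lt_one _⟩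
  · rw [conj_next hirr h, inv_eq_one_div, lt_div_iff_of_neg (by linarith)]
    linarith
  · rw [conj_next hirr h]
    exact inv_lt_zero.mpr (by linarith)

lemma IsReduced.next (hs : IsReduced N s) : IsReduced N (next N s) :=
  isReduced_next hirr hs.1 hs.2.1 hs.2.2.2

lemma IsReduced.eq_of_next_eq (hs : IsReduced N s) (ht : IsReduced N t)
    (h : SqrtCF.next N s = SqrtCF.next N t) : s = t := by
  have hconj : conj N s - ⌊value N s⌋ = conj N t - ⌊value N t⌋ :=
    inv_injective ((conj_next hirr hs.1).symm.trans (h ▸ conj_next hirr ht.1))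
  have hfract : Int.fract (value N s) = Int.fract (value N t) :=
    inv_injective ((value_next hirr hs.1).symm.trans (h ▸ value_next hirr ht.1))
  -- the partial quotients differ by `conj N s - conj N t`, which lies in `(-1, 1)`
  have hfloor : ⌊value N s⌋ = ⌊value N t⌋ := by
    have h₁ : ((⌊value N s⌋ - ⌊value N t⌋ : ℤ) : ℝ) < 1 := by
      push_cast; linarith [hs.2.2.2, ht.2.2.1]
    have h₂ : (-1 : ℝ) < ((⌊value N s⌋ - ⌊value N t⌋ : ℤ) : ℝ) := by
      push_cast; linarith [hs.2.2.1, ht.2.2.2]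
    have h₁' : ⌊value N s⌋ - ⌊value N t⌋ < 1 := by exact_mod_cast h₁
    have h₂' : -1 < ⌊value N s⌋ - ⌊value N t⌋ := by exact_mod_cast h₂
    omega
  rw [hfloor] at hconj
  rw [Int.fract, Int.fract, hfloor] at hfract
  exact eq_of_value_eq_of_conj_eq hs.conj_lt_value (by linarith) (by linarith)

lemma isReduced_reverse (h : s.2 ∣ N - s.1 ^ 2) (hv : 1 < value N s) (hc : conj N s < 0) :
    IsReduced N (reverse N s) := by
  have hQ := snd_ne_zero hirr h
  have hfloor : (1 : ℝ) ≤ ⌊value N s⌋ := by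
    exact_mod_cast Int.le_floor.mpr (by exact_mod_cast hv.le)
  refine ⟨Dvd.intro_left _ (next_snd_mul_snd h), ?_, ?_, ?_⟩
  · rw [value_reverse hQ]; linarith
  · rw [conj_reverse hQ]; linarith [Int.fract_lt_one (value N s)]
  · rw [conj_reverse hQ]; linarith [fract_value_pos hirr h]

lemma isReduced_orbit_succ (k : ℕ) : IsReduced N (orbit N (k + 1)) := by
  induction k with
  | zero =>
    rw [orbit_succ]
    refine isReduced_next hirr (orbit_snd_dvd 0) ?_ ?_
    · rw [value_orbit_zero]; exact one_lt_sqrt_of_irrational hirr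
    · rw [conj_orbit_zero]; linarith [one_lt_sqrt_of_irrational hirr]
  | succ k ih => rw [orbit_succ]; exact ih.next hirr

lemma isReduced_orbit {k : ℕ} (hk : 0 < k) : IsReduced N (orbit N k) := by
  obtain ⟨j, rfl⟩ : ∃ j, k = j + 1 := ⟨k - 1, by omega⟩
  exact isReduced_orbit_succ hirr j

lemma isReduced_reverse_orbit (k : ℕ) : IsReduced N (reverse N (orbit N k)) := by
  cases k with
  | zero =>
    refine isReduced_reverse hirr (orbit_snd_dvd 0) ?_ ?_
    · rw [value_orbit_zero]; exact one_lt_sqrt_of_irrational hirr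
    · rw [conj_orbit_zero]; linarith [one_lt_sqrt_of_irrational hirr]
  | succ k =>
    have hs := isReduced_orbit_succ hirr k
    exact isReduced_reverse hirr hs.1 hs.2.1 hs.2.2.2

lemma isPeriodicPt_orbit_one : ∃ n, 0 < n ∧ Function.IsPeriodicPt (next N) n (orbit N 1) := by
  have := (setOf_isReduced_finite (N := N)).to_subtype
  let f : {s | IsReduced N s} → {s | IsReduced N s} := fun s => ⟨next N s, s.2.next hirr⟩
  have hf : f.Injective := fun s t h =>
    Subtype.ext (s.2.eq_of_next_eq hirr t.2 (congrArg Subtype.val h))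
  obtain ⟨n, hn, hper⟩ := hf.mem_periodicPts ⟨orbit N 1, isReduced_orbit_succ hirr 0⟩
  have hsemi : Function.Semiconj Subtype.val f (next N) := fun _ => rfl
  exact ⟨n, hn, (hsemi.iterate_right n _).symm.trans (congrArg Subtype.val hper)⟩

lemma orbit_sub_eq_reverse {n : ℕ} (hn : 0 < n)
    (hper : Function.IsPeriodicPt (next N) n (orbit N 1)) {k : ℕ} (hk : k < n) :
    orbit N (n - k) = reverse N (orbit N k) := by
  induction k with
  | zero =>
    refine (isReduced_orbit hirr hn).eq_of_next_eq hirr (isReduced_reverse_orbit hirr 0) ?_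
    rw [← orbit_succ, Nat.sub_zero, add_comm, orbit_add_of_isPeriodicPt hper le_rfl,
      next_reverse_orbit_zero]
  | succ k ih =>
    refine (isReduced_orbit hirr (by omega)).eq_of_next_eq hirr
      (isReduced_reverse_orbit hirr _) ?_
    rw [← orbit_succ, show n - (k + 1) + 1 = n - k by omega, ih (by omega), orbit_succ,
      next_reverse_next (orbit_succ k ▸ isReduced_orbit_succ hirr k) (orbit_snd_dvd k)]

end Irrational

end SqrtCF

open SqrtCF

theorem anthyphairesis_sqrt_palindromic_general
    (N : ℕ) (hnsq : ¬ ∃ m : ℕ, N = m * m)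
    (e : ℕ → ℝ) (he : IsAnthSeq (Real.sqrt N) 1 e) :
    (∀ n : ℕ, e n ≠ 0) ∧
    ∃ n : ℕ, 1 ≤ n ∧
      (∀ k : ℕ, 1 ≤ k → ⌊e (k + n) / e (k + n + 1)⌋ = ⌊e k / e (k + 1)⌋) ∧
      ⌊e n / e (n + 1)⌋ = 2 * ⌊e 0 / e 1⌋ ∧
      (∀ j : ℕ, 1 ≤ j → j < n →
        ⌊e j / e (j + 1)⌋ = ⌊e (n - j) / e (n - j + 1)⌋) := by
  have hirr : Irrational √(N : ℝ) := irrational_sqrt_natCast_iff.mpr hnsq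
  have hratio := he.succ_pos_and_ratio_eq one_pos (x := fun k => value N (orbit N k))
    (by rw [value_orbit_zero, div_one])
    (fun k => by rw [orbit_succ, value_next hirr (orbit_snd_dvd k)])
    (fun k => irrational_value hirr (orbit_snd_dvd k))
  have hquot (k : ℕ) : ⌊e k / e (k + 1)⌋ = ⌊value N (orbit N k)⌋ := by rw [(hratio k).2]
  obtain ⟨n, hn, hper⟩ := isPeriodicPt_orbit_one hirr
  refine ⟨fun k => ?_, n, hn, fun k hk => ?_, ?_, fun j hj hjn => ?_⟩
  · cases k with
    | zero => rw [he.1]; exact (zero_lt_one.trans (one_lt_sqrt_of_irrational hirr)).ne'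
    | succ k => exact (hratio k).1.ne'
  · rw [hquot, hquot, orbit_add_of_isPeriodicPt hper hk]
  · rw [hquot, hquot, ← floor_value_reverse_orbit_zero, ← orbit_sub_eq_reverse hirr hn hper hn,
      Nat.sub_zero]
  · have hsym := orbit_sub_eq_reverse hirr hn hper (k := n - j) (by omega)
    rw [Nat.sub_sub_self hjn.le] at hsym
    rw [hquot, hquot, hsym, (isReduced_orbit hirr (by omega)).floor_value_reverse]

/-- Palindromic periodicity of the anthyphairesis of `√N` to `1` for a
non-square `N ≥ 2`: the quotients are periodic with some period `n ≥ 1` from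
the first step, the last quotient of the period is double the initial one,
and the period without its last term is a palindrome. -/
theorem anthyphairesis_sqrt_palindromic
    (N : ℕ) (hN : 2 ≤ N) (hnsq : ¬ ∃ m : ℕ, N = m * m)
    (e : ℕ → ℝ) (he : IsAnthSeq (Real.sqrt N) 1 e) :
    (∀ n : ℕ, e n ≠ 0) ∧
    ∃ n : ℕ, 1 ≤ n ∧
      (∀ k : ℕ, 1 ≤ k → ⌊e (k + n) / e (k + n + 1)⌋ = ⌊e k / e (k + 1)⌋) ∧
      ⌊e n / e (n + 1)⌋ = 2 * ⌊e 0 / e 1⌋ ∧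
      (∀ j : ℕ, 1 ≤ j → j < n →
        ⌊e j / e (j + 1)⌋ = ⌊e (n - j) / e (n - j + 1)⌋) :=
  anthyphairesis_sqrt_palindromic_general N hnsq e he
end
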